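/- arXiv:0804.2812 — 3 statements merged into one kernel-verified Lean document; each statement's English description precedes it below -/
import Mathlib

section
/- Let v_1, …, v_m be monomials of the form v_j = p_{α_j} q_{β_j} q_{γ_j} with α_j, β_j, γ_j ∈ {1,…,n}. Then there exist finitely many indices s, constants c_s ∈ C, elements g_s ∈ GL(n,C), and monomials w_{j,s} of the same form p_α q_β q_γ (1 ≤ j ≤ m), such that v_1 ∧ … ∧ v_m = Σ_s c_s · g_s^*(w_{1,s} ∧ … ∧ w_{m,s}) in Λ^m of the polynomial algebra, and such that for each s the tuple (w_{1,s},…,w_{m,s}) has the flag property: w_{j,s} involves only q_1, …, q_j among the q-variables (and arbitrary p-variables) for every j = 1,…,m. -/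
open MvPolynomial MeasureTheory Finset

noncomputable section

namespace Paper

/-! ## The Weyl algebra and its tensor powers -/

/-- The underlying space of the Weyl algebra `A_{2n}`: complex polynomials in `y_1, …, y_{2n}`. -/
abbrev Poly (n : ℕ) := MvPolynomial (Fin (2*n)) ℂ

/-- Index of the variable `p_j = y_{2j-1}` (0-based). -/
def pIdx (n : ℕ) (j : Fin n) : Fin (2*n) := ⟨2*j.1, by have := j.isLt; omega⟩

/-- Index of the variable `q_j = y_{2j}` (0-based). -/
def qIdx (n : ℕ) (j : Fin n) : Fin (2*n) := ⟨2*j.1+1, by have := j.isLt; omega⟩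

def pVar (n : ℕ) (j : Fin n) : Poly n := X (pIdx n j)
def qVar (n : ℕ) (j : Fin n) : Poly n := X (qIdx n j)

/-- Model for the `M`-fold tensor power of the polynomial algebra: polynomials in `M`
groups of `2n` variables. -/
abbrev Tensor (n M : ℕ) := MvPolynomial (Fin M × Fin (2*n)) ℂ

/-- `a_0 ⊗ a_1 ⊗ ⋯` as an element of the tensor power model. -/
def tensorOf {n M : ℕ} (a : Fin M → Poly n) : Tensor n M :=
  ∏ i : Fin M, rename (fun α => (i, α)) (a i)

/-- The derivative `ᵢ∂_α` acting on the `i`-th tensor factor. -/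
def sd {n M : ℕ} (i : Fin M) (α : Fin (2*n)) : Module.End ℂ (Tensor n M) :=
  (pderiv (i, α)).toLinearMap

lemma pderiv_comm {σ : Type*} (i j : σ) (f : MvPolynomial σ ℂ) :
    pderiv i (pderiv j f) = pderiv j (pderiv i f) := by
  classical
  induction f using MvPolynomial.induction_on' with
  | monomial s a =>
      rcases eq_or_ne i j with h | h
      · subst h; rfl
      · simp only [pderiv_monomial]
        rw [Finsupp.tsub_apply, Finsupp.tsub_apply, Finsupp.single_apply,
          Finsupp.single_apply, if_neg h, if_neg (Ne.symm h)]
        rw [tsub_right_comm]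
        simp only [Nat.sub_zero]
        congr 1
        ring
  | add p q hp hq => simp only [map_add, hp, hq]

lemma sd_commute {n M : ℕ} (i i' : Fin M) (α α' : Fin (2*n)) :
    Commute (sd i α) (sd (n := n) i' α') := by
  apply LinearMap.ext
  intro f
  exact pderiv_comm _ _ f

/-- The bidifferential operator `α_{rs} = Σ_i (ᵣ∂_{2i-1} ₛ∂_{2i} − ᵣ∂_{2i} ₛ∂_{2i-1})`. -/
def alphaOp {n M : ℕ} (r s : Fin M) : Module.End ℂ (Tensor n M) :=
  ∑ j : Fin n, (sd r (pIdx n j) * sd s (qIdx n j) - sd r (qIdx n j) * sd s (pIdx n j))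

lemma alpha_commute {n M : ℕ} (r s r' s' : Fin M) :
    Commute (alphaOp (n := n) r s) (alphaOp (n := n) r' s') := by
  refine Commute.sum_left _ _ _ fun j _ => Commute.sum_right _ _ _ fun l _ => ?_
  refine Commute.sub_left ?_ ?_ <;> refine Commute.sub_right ?_ ?_ <;>
    exact Commute.mul_left (Commute.mul_right (sd_commute _ _ _ _) (sd_commute _ _ _ _))
      (Commute.mul_right (sd_commute _ _ _ _) (sd_commute _ _ _ _))

/-- Truncated exponential `exp(c T)` (exact on elements killed by `T^{N+1}`). -/
def expOp {V : Type*} [AddCommGroup V] [Module ℂ V] (c : ℂ) (T : Module.End ℂ V) (N : ℕ) :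
    Module.End ℂ V :=
  ∑ k ∈ Finset.range (N+1), ((k.factorial : ℂ)⁻¹ * c^k) • (T^k)

lemma expOp_commute {V : Type*} [AddCommGroup V] [Module ℂ V] {T T' : Module.End ℂ V}
    (h : Commute T T') (c c' : ℂ) (N N' : ℕ) :
    Commute (expOp c T N) (expOp c' T' N') := by
  refine Commute.sum_left _ _ _ fun k _ => Commute.sum_right _ _ _ fun l _ => ?_
  exact ((h.pow_pow _ _).smul_left _).smul_right _

/-- The operator `∏_{i<j} exp(co(i,j) · α_{sl(j) sl(i)})`, where `sl` maps the configuration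
points to tensor slots. -/
def Sprod (n : ℕ) {m M : ℕ} (co : Fin m → Fin m → ℝ) (sl : Fin m → Fin M) (N : ℕ) :
    Module.End ℂ (Tensor n M) :=
  (Finset.univ.filter fun p : Fin m × Fin m => p.1 < p.2).noncommProd
    (fun p => expOp ((co p.1 p.2 : ℝ) : ℂ) (alphaOp (sl p.2) (sl p.1)) N)
    (fun _ _ _ _ _ => expOp_commute (alpha_commute _ _ _ _) _ _ _ _)

/-- The first Bernoulli polynomial `B_1(x) = x - 1/2`. -/
def B1R (x : ℝ) : ℝ := x - 1/2

/-- The 1-periodic extension `b_1` of `B_1` from `[0,1)`. -/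
def b1R (x : ℝ) : ℝ := Int.fract x - 1/2

/-- Evaluation of all variables at `0`, followed by multiplication (the map `μ`). -/
def evalZero {n M : ℕ} (t : Tensor n M) : ℂ := eval (fun _ => (0:ℂ)) t

/-- The operator `π_{2n} = det(ᵢ∂_j)`, differentiating tensor slots `1, …, 2n`. -/
def piOp (n : ℕ) : Module.End ℂ (Tensor n (2*n+1)) :=
  ∑ σ : Equiv.Perm (Fin (2*n)), (((Equiv.Perm.sign σ : ℤ) : ℂ)) •
    Finset.univ.noncommProd (fun i : Fin (2*n) => sd i.succ (σ i))
      (fun _ _ _ _ _ => sd_commute _ _ _ _)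

/-- The open simplex `0 < u_1 < ⋯ < u_m < 1`. -/
def simplexDom (m : ℕ) : Set (Fin m → ℝ) :=
  {u | StrictMono u ∧ ∀ i, u i ∈ Set.Ioo (0:ℝ) 1}

/-- The Feigin–Felder–Shoikhet cocycle `τ_{2n} = μ_{2n} ∘ S_{2n} ∘ π_{2n}` as a functional of
`2n+1` arguments. -/
def tauFun (n : ℕ) (a : Fin (2*n+1) → Poly n) : ℂ :=
  ∫ u in simplexDom (2*n),
    evalZero ((Sprod n (fun i j => B1R ((Fin.cons 0 u : Fin (2*n+1) → ℝ) j -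
        (Fin.cons 0 u : Fin (2*n+1) → ℝ) i)) id (tensorOf a).totalDegree)
      ((piOp n) (tensorOf a)))

/-! ## Hochschild cochains as multilinear functionals -/

/-- The space of (inhomogeneous, not-necessarily-linear) cochains: a degree-`k`
Hochschild cochain with values in the dual module is a functional of `k+1` arguments. -/
abbrev Cochain (A : Type*) (V : Type*) := ∀ k : ℕ, (Fin (k+1) → A) → V

/-- The Hochschild differential (for `A*`-valued cochains, in the functional picture),
with respect to the product `mul` on `A`. -/
def Dop {A V : Type*} [AddCommGroup V] [Module ℂ V] (mul : A → A → A)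
    (φ : Cochain A V) : Cochain A V
  | 0 => fun _ => 0
  | (m+1) => fun a =>
      (∑ j : Fin (m+1), ((-1:ℂ)^(j:ℕ)) •
        φ m (fun i => if (i:ℕ) < (j:ℕ) then a i.castSucc
             else if (i:ℕ) = (j:ℕ) then mul (a i.castSucc) (a i.succ) else a i.succ))
      + ((-1:ℂ)^(m+1)) • φ m (fun i => if (i:ℕ) = 0 then mul (a (Fin.last (m+1))) (a 0)
          else a i.castSucc)

/-- The Connes differential `B` (adjoint of `B'`), in the functional picture. -/
def Bop {A V : Type*} [One A] [AddCommGroup V] [Module ℂ V] (φ : Cochain A V) :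
    Cochain A V :=
  fun k a => ∑ j : Fin (k+1), ((-1:ℂ)^(k * (j:ℕ))) •
    φ (k+1) (Fin.cons 1 (fun i : Fin (k+1) => a (j + i)))

/-- Insert `x` right after position `j` in the argument list. -/
def insertArg {A : Type*} {m : ℕ} (x : A) (j : Fin (m+1)) (a : Fin (m+1) → A) :
    Fin (m+2) → A :=
  fun i => if _h : (i:ℕ) ≤ (j:ℕ) then a ⟨i.1, by have := j.isLt; omega⟩
    else if (i:ℕ) = (j:ℕ)+1 then x
    else a ⟨i.1 - 1, by have := i.isLt; omega⟩

/-- The interior product `ι_x`: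
`(ι_x φ)(a_0,…,a_k) = Σ_j (−1)^j φ(a_0,…,a_j,x,a_{j+1},…,a_k)`. -/
def iotaOp {A V : Type*} [AddCommGroup V] [Module ℂ V] (x : A) (φ : Cochain A V) :
    Cochain A V :=
  fun k a => ∑ j : Fin (k+1), ((-1:ℂ)^(j:ℕ)) • φ (k+1) (insertArg x j a)

/-- The FFS cocycle as a cochain concentrated in degree `2n`. -/
def tauCochain (n : ℕ) : Cochain (Poly n) ℂ :=
  fun k => if h : k = 2*n
    then fun a => tauFun n (fun i => a (Fin.cast (by omega) i))
    else fun _ => 0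

/-- The interior product `ι_ω = Σ_j ι_{p_j} ι_{q_j}`. -/
def iotaOmegaOp (n : ℕ) {V : Type*} [AddCommGroup V] [Module ℂ V]
    (φ : Cochain (Poly n) V) : Cochain (Poly n) V :=
  fun k a => ∑ j : Fin n, iotaOp (pVar n j) (iotaOp (qVar n j) φ) k a

/-- The Moyal product on polynomials: `a ⋆ b = μ ∘ exp(α_{01}/2) (a ⊗ b)`. -/
def moyalMul (n : ℕ) (a b : Poly n) : Poly n :=
  rename Prod.snd
    (expOp ((1:ℂ)/2) (alphaOp (n := n) (0 : Fin 2) 1)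
      ((rename (fun α => ((0:Fin 2), α)) a * rename (fun α => ((1:Fin 2), α)) b).totalDegree)
      (rename (fun α => ((0:Fin 2), α)) a * rename (fun α => ((1:Fin 2), α)) b))

/-- The Moyal commutator. -/
def moyalBracket (n : ℕ) (a b : Poly n) : Poly n := moyalMul n a b - moyalMul n b a

/-- The Lie derivative `L_ω = d ∘ ι_ω − ι_ω ∘ d`. -/
def LomegaOp (n : ℕ) {V : Type*} [AddCommGroup V] [Module ℂ V]
    (φ : Cochain (Poly n) V) : Cochain (Poly n) V :=
  Dop (moyalMul n) (iotaOmegaOp n φ) - iotaOmegaOp n (Dop (moyalMul n) φ)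

/-- A cochain in the (genuine) normalized Hochschild complex: multilinear in each slot
and vanishing whenever one of the arguments in positions `1, …, k` equals `1`. -/
def IsNormCochain {A V : Type*} [AddCommMonoid A] [Module ℂ A] [One A]
    [AddCommGroup V] [Module ℂ V] (σ : Cochain A V) : Prop :=
  ∀ k : ℕ, (∃ Ψ : MultilinearMap ℂ (fun _ : Fin (k+1) => A) V, σ k = ⇑Ψ) ∧
    (∀ a : Fin (k+1) → A, (∃ i, i ≠ 0 ∧ a i = 1) → σ k a = 0)

/-- `(1/(n−k)!)(−ι_ω)^{n−k} τ_{2n}`, the degree-`2k` component of the cyclic cocycle. -/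
def tau2k (n k : ℕ) : Cochain (Poly n) ℂ :=
  (((-1:ℂ)^(n-k)) * ((n-k).factorial : ℂ)⁻¹) • ((iotaOmegaOp n)^[n-k] (tauCochain n))

/-! ## Matrix coefficients, Lie algebra cohomology and characteristic classes -/

/-- The algebra `A^r_{2n} = A_{2n} ⊗ M_r(ℂ)`, modeled as matrices of polynomials. -/
abbrev MatPoly (n r : ℕ) := Matrix (Fin r) (Fin r) (Poly n)

/-- The product of `A^r_{2n}`: matrix multiplication with Moyal products of entries. -/
def matMul (n r : ℕ) (x y : MatPoly n r) : MatPoly n r :=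
  Matrix.of fun i j => ∑ l, moyalMul n (x i l) (y l j)

/-- The commutator on `A^r_{2n}`. -/
def matBracket (n r : ℕ) (x y : MatPoly n r) : MatPoly n r :=
  matMul n r x y - matMul n r y x

/-- Extension of a functional `φ` on `A_{2n}` to `A^r_{2n}`; on pure tensors it is
`φ(a_0 ⊗ ⋯ ⊗ a_k)·tr(M_0 ⋯ M_k)`. -/
def matExtend {n r k : ℕ} (φ : (Fin (k+1) → Poly n) → ℂ)
    (x : Fin (k+1) → MatPoly n r) : ℂ :=
  ∑ f : Fin (k+1) → Fin r, φ (fun j => x j (f j) (f (j+1)))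

/-- The Lie subalgebra `h = sp_{2n} ⊕ gl_r`: quadratic polynomials tensor the identity,
plus constant polynomials tensor matrices. -/
def hSubalg (n r : ℕ) : Set (MatPoly n r) :=
  {x | ∃ (a : Poly n) (c : Matrix (Fin r) (Fin r) ℂ), a.IsHomogeneous 2 ∧
      x = Matrix.of fun i j => (if i = j then a else 0) + C (c i j)}

/-- The `h`-equivariant projection `pr : g → h`,
`pr(a ⊗ M) = a^{(2)} ⊗ (tr M/r)·1 + a^{(0)} ⊗ M`. -/
def prH (n r : ℕ) (x : MatPoly n r) : MatPoly n r :=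
  Matrix.of fun i j => (if i = j then (r : ℂ)⁻¹ • (homogeneousComponent 2 (∑ l, x l l))
      else 0) + homogeneousComponent 0 (x i j)

/-- The curvature `C(x ∧ y) = [pr x, pr y] − pr [x, y]`. -/
def curv (n r : ℕ) (x y : MatPoly n r) : MatPoly n r :=
  matBracket n r (prH n r x) (prH n r y) - prH n r (matBracket n r x y)

/-- The fiberwise Poisson bracket on polynomials. -/
def poisson (n : ℕ) (f g : Poly n) : Poly n :=
  ∑ j : Fin n, (pderiv (pIdx n j) f * pderiv (qIdx n j) g
    - pderiv (qIdx n j) f * pderiv (pIdx n j) g)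

/-- The defining `2n`-dimensional representation of `sp_{2n}`: the matrix of the linear
map `y_β ↦ {a, y_β}` attached to a quadratic polynomial `a`. -/
def spMatrix (n : ℕ) (a : Poly n) : Matrix (Fin (2*n)) (Fin (2*n)) ℂ :=
  Matrix.of fun α β => coeff (Finsupp.single α 1) (poisson n a (X β))

/-- The `sp_{2n}`-component of an element of `h ⊂ A^r_{2n}`, in the defining
representation. -/
def xPart (n r : ℕ) (H : MatPoly n r) : Matrix (Fin (2*n)) (Fin (2*n)) ℂ :=
  spMatrix n ((r : ℂ)⁻¹ • homogeneousComponent 2 (∑ l, H l l))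

/-- The `gl_r`-component of an element of `h ⊂ A^r_{2n}`. -/
def mPart (n r : ℕ) (H : MatPoly n r) : Matrix (Fin r) (Fin r) ℂ :=
  Matrix.of fun i j => constantCoeff (H i j)

/-- `Â(tX) = det^{1/2}((tX/2)/sinh(tX/2))` as a function of `t`, where
`sinh(z)/z = Σ_k z^{2k}/(2k+1)!` and the square root is the principal branch
(= the power series square root near `t = 0`). -/
def AhatSpF (N : ℕ) (Xm : Matrix (Fin N) (Fin N) ℂ) (t : ℂ) : ℂ :=
  (Matrix.det (∑' k : ℕ, (((2*k+1).factorial : ℂ))⁻¹ • (((t/2) • Xm)^(2*k)))) ^ (-(1/2 : ℂ))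

/-- `Ch(tM) = tr(exp(tM))` as a function of `t`. -/
def ChF (r : ℕ) (Mm : Matrix (Fin r) (Fin r) ℂ) (t : ℂ) : ℂ :=
  ∑' k : ℕ, (t^k * ((k.factorial : ℂ))⁻¹) * Matrix.trace (Mm^k)

/-- The generating function `t ↦ Â(t·x) Ch(t·M)` of the invariant polynomial
`P = Â Ch` at the element `H ∈ h`. -/
def Pgen (n r : ℕ) (H : MatPoly n r) (t : ℂ) : ℂ :=
  AhatSpF (2*n) (xPart n r H) t * ChF r (mPart n r H) t

/-- `P_k(H)`: the degree-`k` homogeneous component of `Â Ch`, evaluated at `H`. -/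
def PkSingle (n r k : ℕ) (H : MatPoly n r) : ℂ :=
  ((k.factorial : ℂ))⁻¹ * iteratedDeriv k (Pgen n r H) 0

/-- The polarization of `P_k` (a symmetric `k`-linear functional with
`PkPol(H,…,H) = P_k(H)`). -/
def PkPol (n r k : ℕ) (h : Fin k → MatPoly n r) : ℂ :=
  ((k.factorial : ℂ))⁻¹ * ∑ S : Finset (Fin k),
    ((-1:ℂ))^(k - S.card) * PkSingle n r k (∑ i ∈ S, h i)

/-- The Chern–Weil cochain `χ(P_k)`. -/
def chiP (n r k : ℕ) (v : Fin (2*k) → MatPoly n r) : ℂ :=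
  ((k.factorial : ℂ))⁻¹ * ((2:ℂ)^k)⁻¹ * ∑ σ : Equiv.Perm (Fin (2*k)),
    ((Equiv.Perm.sign σ : ℤ) : ℂ) *
    PkPol n r k (fun i => curv n r (v (σ ⟨2*i.1, by have := i.isLt; omega⟩))
      (v (σ ⟨2*i.1+1, by have := i.isLt; omega⟩)))

/-- `ev_1(φ)(v_1 ∧ ⋯ ∧ v_m) = Σ_σ sgn(σ) φ(1 ⊗ v_{σ(1)} ⊗ ⋯ ⊗ v_{σ(m)})`. -/
def ev1 {A : Type*} [One A] {m : ℕ} (φ : (Fin (m+1) → A) → ℂ) (v : Fin m → A) : ℂ :=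
  ∑ σ : Equiv.Perm (Fin m), ((Equiv.Perm.sign σ : ℤ) : ℂ) *
    φ (Fin.cons 1 (fun i => v (σ i)))

/-- Argument list for the Chevalley–Eilenberg differential: the bracket `[x_i, x_j]`
followed by the remaining arguments in order. -/
def dCEarg {A : Type*} {m : ℕ} (br : A → A → A) (x : Fin (m+1) → A)
    (i j : Fin (m+1)) : Fin m → A :=
  fun l => if l.1 = 0 then br (x i) (x j)
    else x ⟨(if l.1 - 1 < i.1 then l.1 - 1 else if l.1 < j.1 then l.1 else l.1 + 1),
      by have := l.isLt; split_ifs <;> omega⟩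

/-- The Chevalley–Eilenberg differential with trivial coefficients:
`(dψ)(x_1,…,x_{m+1}) = Σ_{i<j} (−1)^{i+j} ψ([x_i,x_j] ∧ ⋯ x̂_i ⋯ x̂_j ⋯)`. -/
def dCEgen {A : Type*} {m : ℕ} (br : A → A → A) (ψ : (Fin m → A) → ℂ) :
    (Fin (m+1) → A) → ℂ :=
  fun x => ∑ i : Fin (m+1), ∑ j : Fin (m+1),
    if i < j then ((-1:ℂ)^(i.1 + j.1)) * ψ (dCEarg br x i j) else 0

/-- A cochain of the relative Chevalley–Eilenberg complex `C^m(g, h)`: alternating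
multilinear, vanishing whenever an argument lies in `h`, and `h`-invariant. -/
def IsRelCochain {A : Type*} [AddCommGroup A] [Module ℂ A] (br : A → A → A)
    (hs : Set A) {m : ℕ} (ψ : (Fin m → A) → ℂ) : Prop :=
  (∃ Ψ : AlternatingMap ℂ A ℂ (Fin m), ψ = ⇑Ψ) ∧
  (∀ x : Fin m → A, (∃ i, x i ∈ hs) → ψ x = 0) ∧
  (∀ h ∈ hs, ∀ x : Fin m → A, ∑ i : Fin m, ψ (Function.update x i (br h (x i))) = 0)

/-- A polynomial depending only on the `q`-variables. -/
def IsQPoly (n : ℕ) (a : Poly n) : Prop :=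
  ∀ m ∈ a.support, ∀ j : Fin n, m (pIdx n j) = 0

/-- The Lie subalgebra `W_{n,r}` of elements `Σ_j f_j(q) p_j ⊗ 1 + Σ g(q) ⊗ M`. -/
def Wsub (n r : ℕ) : Set (MatPoly n r) :=
  {x | ∃ (f : Fin n → Poly n) (g : Matrix (Fin r) (Fin r) (Poly n)),
      (∀ j, IsQPoly n (f j)) ∧ (∀ i j, IsQPoly n (g i j)) ∧
      x = Matrix.of fun i j => (if i = j then ∑ l, f l * pVar n l else 0) + g i j}

/-- A polynomial involving only the variables `p_1, q_1, …, p_k, q_k`. -/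
def onlyFirstVars (n k : ℕ) (a : Poly n) : Prop :=
  ∀ m ∈ a.support, ∀ α : Fin (2*n), m α ≠ 0 → α.1 < 2*k

/-! ## Additional integral formulas -/

/-- The right-hand side of the key lemmas: `μ_{2n} ∘ ∫_{0=u_1<u_2<⋯<u_{2n}<1}
∏_{1≤i<j≤2n} e^{b_1(u_j−u_i)α_{ji}} ∘ π_{2n} (1 ⊗ a_1 ⊗ ⋯ ⊗ a_{2n})`. -/
def rhsIntegral (n : ℕ) (a : Fin (2*n) → Poly n) : ℂ :=
  ∫ v in simplexDom (2*n-1),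
    evalZero ((Sprod n
      (fun i j : Fin (2*n) => b1R (((fun i : Fin (2*n) => if h : i.1 = 0 then (0:ℝ)
          else v ⟨i.1 - 1, by have := i.isLt; omega⟩) j)
        - ((fun i : Fin (2*n) => if h : i.1 = 0 then (0:ℝ)
          else v ⟨i.1 - 1, by have := i.isLt; omega⟩) i)))
      Fin.succ (tensorOf (Fin.cons 1 a)).totalDegree)
      ((piOp n) (tensorOf (Fin.cons 1 a : Fin (2*n+1) → Poly n))))

/-- The quadratic polynomial `Σ_{ij} x_{ij} p_i q_j` attached to a matrix `x ∈ gl_n`. -/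
def glToWeyl (n : ℕ) (x : Matrix (Fin n) (Fin n) ℂ) : Poly n :=
  ∑ i : Fin n, ∑ j : Fin n, C (x i j) * (pVar n i * qVar n j)

/-- `h_m(a_1,…,a_m) = μ_m ∘ ∫_{[0,1]^m} ∏_{1≤i<j≤m} e^{b_1(u_j−u_i)α_{ji}}
(1 ⊗ a_1 ⊗ ⋯ ⊗ a_m)`. -/
def hm (n m : ℕ) (a : Fin m → Poly n) : ℂ :=
  ∫ u in (Set.univ.pi fun _ : Fin m => Set.Icc (0:ℝ) 1),
    evalZero ((Sprod n (fun i j => b1R (u j - u i)) Fin.succ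
      (tensorOf (Fin.cons 1 a)).totalDegree) (tensorOf (Fin.cons 1 a : Fin (m+1) → Poly n)))

/-- `Â_m(x)`: the degree-`m` Taylor coefficient at `t = 0` of
`t ↦ det((tx/2)/sinh(tx/2))` (full determinant, no square root). -/
def AhatGLCoeff (n : ℕ) (x : Matrix (Fin n) (Fin n) ℂ) (m : ℕ) : ℂ :=
  ((m.factorial : ℂ))⁻¹ * iteratedDeriv m (fun t : ℂ =>
    (Matrix.det (∑' k : ℕ, (((2*k+1).factorial : ℂ))⁻¹ • (((t/2) • x)^(2*k))))⁻¹) 0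

/-! ## Statement 10: GL(n) action and wedge products -/

/-- The substitution automorphism `g^*` induced by `g ∈ GL(n,ℂ)`: it acts on the span
of the `q`'s by the natural action and on the span of the `p`'s by the dual
(inverse-transpose) action, preserving `Σ_j p_j ⊗ q_j`. -/
def glAct (n : ℕ) (g : GL (Fin n) ℂ) : Poly n →ₐ[ℂ] Poly n :=
  aeval (fun α : Fin (2*n) =>
    if α.1 % 2 = 0
    then ∑ i : Fin n,
      C (((g⁻¹ : GL (Fin n) ℂ) : Matrix (Fin n) (Fin n) ℂ) i ⟨α.1/2, by have := α.isLt; omega⟩)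
        * pVar n i
    else ∑ i : Fin n,
      C ((g : Matrix (Fin n) (Fin n) ℂ) ⟨α.1/2, by have := α.isLt; omega⟩ i) * qVar n i)

/-- The wedge `v_1 ∧ ⋯ ∧ v_m` in the exterior algebra of the polynomial algebra. -/
def wedgeOf {n m : ℕ} (v : Fin m → Poly n) : ExteriorAlgebra ℂ (Poly n) :=
  (List.ofFn fun j => ExteriorAlgebra.ι ℂ (v j)).prod

/-!
Polarization, `2 q_β q_γ = (q_β + q_γ)² - q_β² - q_γ²`, and multilinearity of the wedge product
reduce the claim to wedges of elements `p_{α_j} ℓ_j²` with `ℓ_j` linear forms in the `q`'s.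
Applying Gram–Schmidt to `ℓ_1, …, ℓ_m` produces `g ∈ GL(n)` such that `g^* ℓ_j` involves only
`q_1, …, q_j`, while `g^* p_α` is still a linear form in the `p`'s. Expanding
`g^*(p_{α_j} ℓ_j²)` into monomials `p_α q_β q_γ` with `β, γ ≤ j` and applying `(g⁻¹)^*` writes
the wedge as a combination of `GL(n)`-translates of flag wedges.
-/

end Paper

open Matrix Module InnerProductSpace

theorem MultilinearMap.map_mem_span_image_pi {R ι N : Type*} {M : ι → Type*} [CommSemiring R]
    [Fintype ι] [DecidableEq ι] [∀ i, AddCommMonoid (M i)] [AddCommMonoid N]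
    [∀ i, Module R (M i)] [Module R N] (f : MultilinearMap R M N) {s : ∀ i, Set (M i)}
    {v : ∀ i, M i} (hv : ∀ i, v i ∈ Submodule.span R (s i)) :
    f v ∈ Submodule.span R (f '' Set.univ.pi s) := by
  choose N c x hx using fun i => Submodule.mem_span_set'.mp (hv i)
  have hv' : v = fun i => ∑ k, c i k • (x i k : M i) := funext fun i => (hx i).symm
  rw [hv', MultilinearMap.map_sum]
  refine Submodule.sum_mem _ fun r _ => ?_
  rw [f.map_smul_univ]
  exact Submodule.smul_mem _ _ (Submodule.subset_span ⟨_, fun i _ => (x i (r i)).2, rfl⟩)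

theorem exists_basis_repr_eq_zero_of_lt {𝕜 : Type*} [RCLike 𝕜] {m n : ℕ}
    (u : Fin m → Fin n → 𝕜) :
    ∃ b : Basis (Fin n) 𝕜 (Fin n → 𝕜),
      ∀ (j : Fin m) (i : Fin n), (j : ℕ) < i → b.repr (u j) i = 0 := by
  let f : Fin n → EuclideanSpace 𝕜 (Fin n) := fun i =>
    if h : (i : ℕ) < m then WithLp.toLp 2 (u ⟨i, h⟩) else 0
  have hcard : finrank 𝕜 (EuclideanSpace 𝕜 (Fin n)) = Fintype.card (Fin n) := by simp
  let b := gramSchmidtOrthonormalBasis hcard f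
  refine ⟨b.toBasis.map (WithLp.linearEquiv 2 𝕜 (Fin n → 𝕜)), fun j i hji => ?_⟩
  have hj : (j : ℕ) < n := hji.trans i.isLt
  have h := gramSchmidtOrthonormalBasis_inv_triangular' hcard f (i := ⟨j, hj⟩) (j := i) hji
  simp only [f, j.isLt, dite_true] at h
  simpa [Basis.map_repr] using h

theorem Module.Basis.exists_vecMul_eq_repr {R ι : Type*} [CommRing R] [Fintype ι] [DecidableEq ι]
    (b : Basis ι R (ι → R)) : ∃ g : GL ι R, ∀ x, x ᵥ* (g : Matrix ι ι R) = b.repr x := by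
  have hunit : IsUnit (b.toMatrix (Pi.basisFun R ι))ᵀ := by
    rw [Matrix.isUnit_iff_isUnit_det, Matrix.det_transpose, ← Basis.det_apply]
    exact b.isUnit_det _
  refine ⟨hunit.unit, fun x => ?_⟩
  rw [IsUnit.unit_spec, Matrix.vecMul_transpose, ← Basis.toMatrix_mulVec_repr (Pi.basisFun R ι)]
  rfl

namespace Paper

section

variable {n : ℕ}

lemma exists_eq_pIdx_or_eq_qIdx (α : Fin (2*n)) : ∃ k : Fin n, α = pIdx n k ∨ α = qIdx n k := by
  refine ⟨⟨α / 2, by omega⟩, ?_⟩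
  rcases Nat.mod_two_eq_zero_or_one α with h | h
  · exact Or.inl (Fin.ext (by simp only [pIdx]; omega))
  · exact Or.inr (Fin.ext (by simp only [qIdx]; omega))

lemma pIdx_ne_qIdx (a b : Fin n) : pIdx n a ≠ qIdx n b := by
  simp only [pIdx, qIdx, ne_eq, Fin.mk.injEq]; omega

lemma qIdx_injective : Function.Injective (qIdx n) := fun a b h => by
  simp only [qIdx, Fin.mk.injEq] at h; omega

lemma algHom_ext_pVar_qVar {A : Type*} [Semiring A] [Algebra ℂ A] {f f' : Poly n →ₐ[ℂ] A}
    (hp : ∀ a, f (pVar n a) = f' (pVar n a)) (hq : ∀ b, f (qVar n b) = f' (qVar n b)) :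
    f = f' := by
  refine MvPolynomial.algHom_ext fun α => ?_
  obtain ⟨k, rfl | rfl⟩ := exists_eq_pIdx_or_eq_qIdx α
  exacts [hp k, hq k]

def pLin (n : ℕ) : (Fin n → ℂ) →ₗ[ℂ] Poly n := Fintype.linearCombination ℂ (pVar n)

def qLin (n : ℕ) : (Fin n → ℂ) →ₗ[ℂ] Poly n := Fintype.linearCombination ℂ (qVar n)

lemma pLin_single_one (a : Fin n) : pLin n (Pi.single a 1) = pVar n a := by
  simp [pLin, Fintype.linearCombination_apply_single]

lemma qLin_single_one (b : Fin n) : qLin n (Pi.single b 1) = qVar n b := by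
  simp [qLin, Fintype.linearCombination_apply_single]

lemma glAct_pVar (g : GL (Fin n) ℂ) (a : Fin n) :
    glAct n g (pVar n a) = pLin n (((g⁻¹ : GL (Fin n) ℂ) : Matrix (Fin n) (Fin n) ℂ)ᵀ a) := by
  have hpar : (pIdx n a : ℕ) % 2 = 0 := by simp [pIdx]
  have hhalf : (⟨(pIdx n a : ℕ) / 2, by omega⟩ : Fin n) = a := Fin.ext (by simp [pIdx])
  simp only [glAct, pVar, aeval_X, if_pos hpar, hhalf, pLin, Fintype.linearCombination_apply,
    C_mul', transpose_apply]

lemma glAct_qVar (g : GL (Fin n) ℂ) (b : Fin n) :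
    glAct n g (qVar n b) = qLin n ((g : Matrix (Fin n) (Fin n) ℂ) b) := by
  have hpar : ¬ (qIdx n b : ℕ) % 2 = 0 := by simp [qIdx]
  have hhalf : (⟨(qIdx n b : ℕ) / 2, by omega⟩ : Fin n) = b := Fin.ext (by simp [qIdx]; omega)
  simp only [glAct, qVar, aeval_X, if_neg hpar, hhalf, qLin, Fintype.linearCombination_apply,
    C_mul']

lemma glAct_pLin (g : GL (Fin n) ℂ) (μ : Fin n → ℂ) :
    glAct n g (pLin n μ) = pLin n (((g⁻¹ : GL (Fin n) ℂ) : Matrix (Fin n) (Fin n) ℂ) *ᵥ μ) := by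
  calc glAct n g (pLin n μ) = ∑ k, μ k • glAct n g (pVar n k) := by
        simp only [pLin, Fintype.linearCombination_apply, map_sum, map_smul]
    _ = _ := by
        simp only [glAct_pVar, ← map_smul, ← map_sum, ← vecMul_transpose, vecMul_eq_sum]

lemma glAct_qLin (g : GL (Fin n) ℂ) (u : Fin n → ℂ) :
    glAct n g (qLin n u) = qLin n (u ᵥ* (g : Matrix (Fin n) (Fin n) ℂ)) := by
  calc glAct n g (qLin n u) = ∑ k, u k • glAct n g (qVar n k) := by
        simp only [qLin, Fintype.linearCombination_apply, map_sum, map_smul]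
    _ = _ := by simp only [glAct_qVar, ← map_smul, ← map_sum, vecMul_eq_sum]

lemma glAct_inv_glAct (g : GL (Fin n) ℂ) (x : Poly n) : glAct n g⁻¹ (glAct n g x) = x := by
  suffices h : (glAct n g⁻¹).comp (glAct n g) = AlgHom.id ℂ (Poly n) from
    AlgHom.congr_fun h x
  refine algHom_ext_pVar_qVar (fun a => ?_) (fun b => ?_)
  · simp only [AlgHom.comp_apply, ← pLin_single_one, glAct_pLin, inv_inv, mulVec_mulVec,
      ← Units.val_mul, mul_inv_cancel, Units.val_one, one_mulVec, AlgHom.id_apply]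
  · simp only [AlgHom.comp_apply, ← qLin_single_one, glAct_qLin, vecMul_vecMul,
      ← Units.val_mul, mul_inv_cancel, Units.val_one, vecMul_one, AlgHom.id_apply]

lemma pLin_mem_span (μ : Fin n → ℂ) : pLin n μ ∈ Submodule.span ℂ (Set.range (pVar n)) := by
  rw [← Fintype.range_linearCombination]
  exact ⟨μ, rfl⟩

lemma qLin_mem_span_of_eq_zero {j : ℕ} {μ : Fin n → ℂ} (hμ : ∀ i : Fin n, j < i → μ i = 0) :
    qLin n μ ∈ Submodule.span ℂ (qVar n '' {l | (l : ℕ) ≤ j}) := by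
  rw [qLin, Fintype.linearCombination_apply]
  refine Submodule.sum_mem _ fun i _ => ?_
  rcases le_or_gt (i : ℕ) j with h | h
  · exact Submodule.smul_mem _ _ (Submodule.subset_span ⟨i, h, rfl⟩)
  · simp [hμ i h]

def flagMonomials (n j : ℕ) : Set (Poly n) :=
  {x | ∃ α β γ : Fin n, (β : ℕ) ≤ j ∧ (γ : ℕ) ≤ j ∧ x = pVar n α * qVar n β * qVar n γ}

lemma mul_mul_mem_span_flagMonomials {j : ℕ} {x y z : Poly n}
    (hx : x ∈ Submodule.span ℂ (Set.range (pVar n)))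
    (hy : y ∈ Submodule.span ℂ (qVar n '' {l | (l : ℕ) ≤ j}))
    (hz : z ∈ Submodule.span ℂ (qVar n '' {l | (l : ℕ) ≤ j})) :
    x * y * z ∈ Submodule.span ℂ (flagMonomials n j) := by
  have hxyz := Submodule.mul_mem_mul (Submodule.mul_mem_mul hx hy) hz
  rw [Submodule.span_mul_span, Submodule.span_mul_span] at hxyz
  refine Submodule.span_mono ?_ hxyz
  rintro _ ⟨_, ⟨_, ⟨α, rfl⟩, _, ⟨β, hβ, rfl⟩, rfl⟩, _, ⟨γ, hγ, rfl⟩, rfl⟩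
  exact ⟨α, β, γ, hβ, hγ, rfl⟩

lemma eq_or_eq_of_mem_support_pVar_mul_qVar_mul_qVar {α β γ l : Fin n} {mo : Fin (2*n) →₀ ℕ}
    (hmo : mo ∈ (pVar n α * qVar n β * qVar n γ).support) (hl : mo (qIdx n l) ≠ 0) :
    l = β ∨ l = γ := by
  simp only [pVar, qVar, X, monomial_mul, one_mul, support_monomial, one_ne_zero, if_false,
    Finset.mem_singleton] at hmo
  subst hmo
  by_contra! h
  simp [pIdx_ne_qIdx, qIdx_injective.eq_iff, Ne.symm h.1, Ne.symm h.2] at hl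

lemma wedgeOf_mem_span_image_pi {m : ℕ} {T : Fin m → Set (Poly n)} {v : Fin m → Poly n}
    (hv : ∀ j, v j ∈ Submodule.span ℂ (T j)) :
    wedgeOf v ∈ Submodule.span ℂ (wedgeOf '' Set.univ.pi T) :=
  (ExteriorAlgebra.ιMulti ℂ m).toMultilinearMap.map_mem_span_image_pi hv

def flagWedges (n m : ℕ) : Set (ExteriorAlgebra ℂ (Poly n)) :=
  {x | ∃ (g : GL (Fin n) ℂ) (w : Fin m → Poly n),
    (∀ j : Fin m, w j ∈ flagMonomials n j) ∧ x = wedgeOf fun j => glAct n g (w j)}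

lemma wedgeOf_pVar_mul_qLin_sq_mem_span_flagWedges {m : ℕ} (a : Fin m → Fin n)
    (u : Fin m → Fin n → ℂ) :
    wedgeOf (fun j => pVar n (a j) * qLin n (u j) ^ 2) ∈
      Submodule.span ℂ (flagWedges n m) := by
  obtain ⟨b, hb⟩ := exists_basis_repr_eq_zero_of_lt u
  obtain ⟨g, hg⟩ := b.exists_vecMul_eq_repr
  have hw : ∀ j : Fin m, glAct n g (pVar n (a j) * qLin n (u j) ^ 2) ∈
      Submodule.span ℂ (flagMonomials n j) := by
    intro j
    have hq := qLin_mem_span_of_eq_zero (j := j) (μ := u j ᵥ* (g : Matrix (Fin n) (Fin n) ℂ))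
      (fun i hi => by rw [hg]; exact hb j i hi)
    rw [map_mul, map_pow, sq, ← mul_assoc, glAct_pVar, glAct_qLin]
    exact mul_mul_mem_span_flagMonomials (pLin_mem_span _) hq hq
  have hmem := wedgeOf_mem_span_image_pi fun j => by
    have := Submodule.mem_map_of_mem (f := (glAct n g⁻¹).toLinearMap) (hw j)
    rwa [← Submodule.span_image, AlgHom.toLinearMap_apply, glAct_inv_glAct] at this
  refine Submodule.span_mono ?_ hmem
  rintro _ ⟨x, hx, rfl⟩
  choose w hw hxw using fun j => hx j trivial
  exact ⟨g⁻¹, w, hw, by rw [← funext hxw]; rfl⟩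

lemma pVar_mul_qVar_mul_qVar_mem_span (α β γ : Fin n) :
    pVar n α * qVar n β * qVar n γ ∈
      Submodule.span ℂ {x | ∃ (a : Fin n) (u : Fin n → ℂ), x = pVar n a * qLin n u ^ 2} := by
  have hsq : ∀ u, pVar n α * qLin n u ^ 2 ∈
      Submodule.span ℂ {x | ∃ (a : Fin n) (u : Fin n → ℂ), x = pVar n a * qLin n u ^ 2} :=
    fun u => Submodule.subset_span ⟨α, u, rfl⟩
  have hpol : pVar n α * qVar n β * qVar n γ = (2⁻¹ : ℂ) •
      (pVar n α * qLin n (Pi.single β 1 + Pi.single γ 1) ^ 2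
        - pVar n α * qLin n (Pi.single β 1) ^ 2 - pVar n α * qLin n (Pi.single γ 1) ^ 2) := by
    rw [eq_inv_smul_iff₀ two_ne_zero, two_smul, map_add, qLin_single_one, qLin_single_one]
    ring
  rw [hpol]
  exact Submodule.smul_mem _ _ (Submodule.sub_mem _ (Submodule.sub_mem _ (hsq _) (hsq _)) (hsq _))

lemma wedgeOf_mem_span_flagWedges {m : ℕ} {v : Fin m → Poly n}
    (hv : ∀ j, ∃ α β γ : Fin n, v j = pVar n α * qVar n β * qVar n γ) :
    wedgeOf v ∈ Submodule.span ℂ (flagWedges n m) := by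
  have hmem := wedgeOf_mem_span_image_pi fun j => by
    obtain ⟨α, β, γ, hj⟩ := hv j
    exact hj ▸ pVar_mul_qVar_mul_qVar_mem_span α β γ
  refine Submodule.span_le.mpr ?_ hmem
  rintro _ ⟨x, hx, rfl⟩
  choose a u hxu using fun j => hx j trivial
  rw [funext hxu]
  exact wedgeOf_pVar_mul_qLin_sq_mem_span_flagWedges a u

end

theorem statement10 (n m : ℕ) (v : Fin m → Poly n)
    (hv : ∀ j, ∃ α β γ : Fin n, v j = pVar n α * qVar n β * qVar n γ) :
    ∃ (N : ℕ) (c : Fin N → ℂ) (g : Fin N → GL (Fin n) ℂ) (w : Fin N → Fin m → Poly n),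
      (∀ s j, ∃ α β γ : Fin n, w s j = pVar n α * qVar n β * qVar n γ) ∧
      (∀ s (j : Fin m), ∀ mo ∈ (w s j).support, ∀ l : Fin n,
          mo (qIdx n l) ≠ 0 → l.1 ≤ j.1) ∧
      wedgeOf v = ∑ s, c s • wedgeOf (fun j => glAct n (g s) (w s j)) := by
  obtain ⟨N, c, x, hx⟩ := Submodule.mem_span_set'.mp (wedgeOf_mem_span_flagWedges hv)
  choose g w hflag hxgw using fun s => (x s).2
  refine ⟨N, c, g, w, fun s j => ?_, fun s j mo hmo l hl => ?_, ?_⟩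
  · obtain ⟨α, β, γ, -, -, h⟩ := hflag s j
    exact ⟨α, β, γ, h⟩
  · obtain ⟨α, β, γ, hβ, hγ, h⟩ := hflag s j
    rw [h] at hmo
    rcases eq_or_eq_of_mem_support_pVar_mul_qVar_mul_qVar hmo hl with rfl | rfl
    exacts [hβ, hγ]
  · simp only [← hx, hxgw]

end Paper
end
end

section
/- For every integer j ≥ 2, the periodic Bernoulli function b_j equals (−1)^{j+1} j! times the j-fold convolution power of b_1 on the circle R/Z: b_j(x) = (−1)^{j+1} j! (b_1 * b_1 * … * b_1)(x) (j factors) for all x ∈ R. -/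
open MvPolynomial MeasureTheory Finset

noncomputable section

namespace Paper

/-! ## Statements 13, 14: Bernoulli functions -/

/-- The periodic Bernoulli function `b_j`. -/
def bper (j : ℕ) (x : ℝ) : ℝ := Polynomial.aeval (Int.fract x) (Polynomial.bernoulli j)

/-- Convolution on the circle `ℝ/ℤ`. -/
def circConv (f g : ℝ → ℝ) : ℝ → ℝ := fun x => ∫ t in (0:ℝ)..1, f (x - t) * g t

/-- `convIter f m` is the `(m+1)`-fold convolution power of `f`. -/
def convIter (f : ℝ → ℝ) : ℕ → (ℝ → ℝ)
  | 0 => f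
  | (m+1) => circConv (convIter f m) f

/-! For `m ≥ 1`, integrating by parts on `(0, 1)`, where `b₁(t) = t - 1/2` and `b_{m+1}` is a
continuous 1-periodic antiderivative of `(m+1) b_m` off the integers, gives
`b_m * b₁ = -b_{m+1} / (m+1)`; the boundary terms combine by periodicity. Iterating,
the `(k+1)`-fold convolution power of `b₁` is `(-1)^k b_{k+1} / (k+1)!`. -/

open Topology

lemma bper_eq_bernoulliFun_fract (j : ℕ) (x : ℝ) : bper j x = bernoulliFun j (Int.fract x) := by
  rw [bper, bernoulliFun, Polynomial.aeval_def, Polynomial.eval₂_eq_eval_map]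

lemma b1R_eq_bper_one : b1R = bper 1 := by
  ext x
  simp [b1R, bper_eq_bernoulliFun_fract]

lemma bper_periodic (j : ℕ) : Function.Periodic (bper j) 1 := fun x => by
  simp [bper_eq_bernoulliFun_fract]

lemma continuous_bper {j : ℕ} (hj : j ≠ 1) : Continuous (bper j) := by
  rw [show bper j = bernoulliFun j ∘ Int.fract from funext (bper_eq_bernoulliFun_fract j)]
  exact (continuous_bernoulliFun j).continuousOn.comp_fract''
    (bernoulliFun_endpoints_eq_of_ne_one hj).symm

lemma bper_eventuallyEq (j : ℕ) {x : ℝ} (hx : Int.fract x ≠ 0) :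
    bper j =ᶠ[𝓝 x] fun y => bernoulliFun j (y - ⌊x⌋) := by
  have hlt : (⌊x⌋ : ℝ) < x := by
    have := (Int.fract_nonneg x).lt_of_ne (Ne.symm hx)
    rw [Int.fract] at this
    linarith
  filter_upwards [Ioo_mem_nhds hlt (Int.lt_floor_add_one x)] with y hy
  rw [bper_eq_bernoulliFun_fract, Int.fract, Int.floor_eq_iff.2 ⟨hy.1.le, hy.2⟩]

lemma hasDerivAt_bper (j : ℕ) {x : ℝ} (hx : Int.fract x ≠ 0) :
    HasDerivAt (bper (j + 1)) ((j + 1) * bper j x) x := by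
  have h := (hasDerivAt_bernoulliFun (j + 1) (x - ⌊x⌋)).comp x ((hasDerivAt_id x).sub_const _)
  refine (h.congr_of_eventuallyEq (bper_eventuallyEq (j + 1) hx)).congr_deriv ?_
  rw [bper_eq_bernoulliFun_fract, Int.fract, Nat.add_sub_cancel, mul_one]
  push_cast
  ring

lemma exists_abs_bper_le (j : ℕ) : ∃ C, ∀ x, |bper j x| ≤ C := by
  obtain ⟨C, hC⟩ := (isCompact_Icc (a := (0 : ℝ)) (b := 1)).exists_bound_of_continuousOn
    (continuous_bernoulliFun j).continuousOn
  exact ⟨C, fun x => by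
    simpa [bper_eq_bernoulliFun_fract] using hC _ ⟨Int.fract_nonneg x, (Int.fract_lt_one x).le⟩⟩

lemma measurable_bper (j : ℕ) : Measurable (bper j) := by
  rw [show bper j = bernoulliFun j ∘ Int.fract from funext (bper_eq_bernoulliFun_fract j)]
  exact (continuous_bernoulliFun j).measurable.comp measurable_fract

lemma intervalIntegrable_bper_sub_mul_bper (i j : ℕ) (x a b : ℝ) :
    IntervalIntegrable (fun t => bper i (x - t) * bper j t) volume a b := by
  obtain ⟨C, hC⟩ := exists_abs_bper_le i
  obtain ⟨D, hD⟩ := exists_abs_bper_le j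
  refine (intervalIntegrable_const (c := C * D)).mono_fun ?_ (ae_of_all _ fun t => ?_)
  · exact (((measurable_bper i).comp (measurable_const.sub measurable_id)).mul
      (measurable_bper j)).aestronglyMeasurable
  · simp only [norm_mul, Real.norm_eq_abs]
    exact mul_le_mul ((hC _).trans (le_abs_self C)) ((hD _).trans (le_abs_self D))
      (abs_nonneg _) (abs_nonneg _)

lemma circConv_bper_b1R {m : ℕ} (hm : m ≠ 0) (x : ℝ) :
    circConv (bper m) b1R x = -bper (m + 1) x / (m + 1) := by
  set G : ℝ → ℝ := fun t => -((t - 1 / 2) * bper (m + 1) (x - t)) / (m + 1)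
    - bper (m + 2) (x - t) / ((m + 1) * (m + 2))
  set S : Set ℝ := (x - ·) '' Set.range ((↑) : ℤ → ℝ)
  have hG_cont : Continuous G := by
    have h1 := continuous_bper (j := m + 1) (by omega)
    have h2 := continuous_bper (j := m + 2) (by omega)
    fun_prop
  have hG_deriv : ∀ t ∈ Set.Ioo (0 : ℝ) 1 \ S, HasDerivAt G (bper m (x - t) * b1R t) t := by
    rintro t ⟨ht, htS⟩
    have hfract : Int.fract (x - t) ≠ 0 := fun h => htS <| by
      obtain ⟨n, hn⟩ := Int.fract_eq_zero_iff.1 h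
      exact ⟨n, ⟨n, rfl⟩, by rw [hn]; ring⟩
    have hsub := (hasDerivAt_id t).const_sub x
    have d1 := (hasDerivAt_bper m hfract).comp t hsub
    have d2 := (hasDerivAt_bper (m + 1) hfract).comp t hsub
    refine ((((hasDerivAt_id t).sub_const (1 / 2)).mul d1).neg.div_const _ |>.sub
      (d2.div_const _)).congr_deriv ?_
    rw [b1R, Int.fract_eq_self.2 ⟨ht.1.le, ht.2⟩]
    simp only [Function.comp_def, id]
    push_cast
    field_simp
    ring
  rw [circConv, integral_eq_of_hasDerivAt_off_countable_of_le G _ zero_le_one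
    ((Set.countable_range _).image _) hG_cont.continuousOn hG_deriv
    (b1R_eq_bper_one ▸ intervalIntegrable_bper_sub_mul_bper m 1 x 0 1)]
  simp only [G, (bper_periodic _).sub_eq x, sub_zero]
  field_simp
  ring

lemma circConv_const_mul_left (c : ℝ) (f g : ℝ → ℝ) (x : ℝ) :
    circConv (fun y => c * f y) g x = c * circConv f g x := by
  simp only [circConv, mul_assoc, intervalIntegral.integral_const_mul]

lemma convIter_b1R (k : ℕ) :
    convIter b1R k = fun x => (-1) ^ k / (k + 1).factorial * bper (k + 1) x := by
  induction k with
  | zero => simp [convIter, b1R_eq_bper_one]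
  | succ k ih =>
    funext x
    rw [convIter, ih, circConv_const_mul_left, circConv_bper_b1R k.succ_ne_zero,
      Nat.factorial_succ (k + 1)]
    push_cast
    field_simp
    ring

theorem statement13 (j : ℕ) (hj : 2 ≤ j) (x : ℝ) :
    bper j x = (-1:ℝ)^(j+1) * (j.factorial : ℝ) * convIter b1R (j-1) x := by
  obtain ⟨k, rfl⟩ : ∃ k, j = k + 1 := ⟨j - 1, by omega⟩
  have hsign : (-1 : ℝ) ^ (k + 1 + 1) * (-1) ^ k = 1 := by
    rw [← pow_add]
    exact Even.neg_one_pow ⟨k + 1, by ring⟩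
  rw [Nat.add_sub_cancel, convIter_b1R]
  field_simp
  linear_combination (-bper (k + 1) x) * hsign

end Paper
end
end

section
/- For every integer l ≥ 2, ∫_{[0,1]^l} b_1(u_1 − u_2) b_1(u_2 − u_3) ⋯ b_1(u_{l−1} − u_l) b_1(u_l − u_1) du_1 ⋯ du_l = −B_l / l!, where B_l = B_l(0) is the l-th Bernoulli number. (For odd l ≥ 3 both sides are 0.) -/
open MvPolynomial MeasureTheory Finset

noncomputable section

namespace Paper

/-!
Write `P_k(x) = B_k({x})` for the periodic Bernoulli functions, so that `b₁ = P₁`. On `[0, z]` and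
on `(z, 1]` the kernel `t ↦ b₁(z - t)` is affine, and integrating it against `B_k` gives the
convolution identity `∫₀¹ b₁(x - t) P_k(t - y) dt = -P_{k+1}(x - y) / (k + 1)` for `k ≥ 1`.
Integrating out the interior vertices of a path `x, v₁, …, v_m, y` one at a time therefore turns
`b₁(x - v₁) ⋯ b₁(v_m - y)` into `(-1)^m P_{m+1}(x - y) / (m + 1)!`. Closing the cycle at
`x = y = u₁` leaves `(-1)^(l-1) B_l / l!`, which is `-B_l / l!` because `B_l = 0` for odd `l ≥ 3`.
-/

section

open Set intervalIntegral

lemma b1R_of_mem_Ico_zero_one {x : ℝ} (hx : x ∈ Ico (0:ℝ) 1) : b1R x = x - 1/2 := by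
  rw [b1R, Int.fract_eq_self.mpr hx]

lemma b1R_of_mem_Ico_neg_one_zero {x : ℝ} (hx : x ∈ Ico (-1:ℝ) 0) : b1R x = x + 1/2 := by
  have : Int.fract (x + 1) = x + 1 := Int.fract_eq_self.mpr ⟨by linarith [hx.1], by linarith [hx.2]⟩
  rw [b1R, ← Int.fract_add_one, this]; ring

lemma b1R_add_intCast (x : ℝ) (n : ℤ) : b1R (x + n) = b1R x := by
  rw [b1R, b1R, Int.fract_add_intCast]

def periodicBernoulli (k : ℕ) (x : ℝ) : ℝ := bernoulliFun k (Int.fract x)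

lemma periodicBernoulli_one : periodicBernoulli 1 = b1R := by
  ext x; rw [periodicBernoulli, bernoulliFun_one, b1R]

lemma periodicBernoulli_periodic (k : ℕ) : Function.Periodic (periodicBernoulli k) 1 :=
  fun x => by rw [periodicBernoulli, periodicBernoulli, Int.fract_add_one]

lemma b1R_periodic : Function.Periodic b1R 1 := periodicBernoulli_one ▸ periodicBernoulli_periodic 1

lemma measurable_b1R : Measurable b1R := measurable_fract.sub measurable_const

lemma abs_b1R_le (x : ℝ) : |b1R x| ≤ 1 := by
  rw [b1R, abs_le]
  constructor <;> linarith [Int.fract_nonneg x, Int.fract_lt_one x]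

lemma intervalIntegrable_b1R_sub (z a b : ℝ) :
    IntervalIntegrable (fun t => b1R (z - t)) volume a b := by
  rw [intervalIntegrable_iff]
  exact IntegrableOn.of_bound measure_Ioc_lt_top
    (measurable_b1R.comp (measurable_const.sub measurable_id)).aestronglyMeasurable 1
    (ae_of_all _ fun t => abs_b1R_le _)

lemma hasDerivAt_sub_mul_bernoulliFun (k : ℕ) (c t : ℝ) :
    HasDerivAt (fun t => (c - t) * bernoulliFun (k+1) t / (k+1)
      + bernoulliFun (k+2) t / ((k+1)*(k+2))) ((c - t) * bernoulliFun k t) t := by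
  have h1 : HasDerivAt (fun t => (c - t) * bernoulliFun (k+1) t / (k+1))
      ((-1 * bernoulliFun (k+1) t + (c - t) * ((k+1) * bernoulliFun k t)) / (k+1)) t := by
    simpa using ((hasDerivAt_id t).const_sub c).mul (hasDerivAt_bernoulliFun (k+1) t)
      |>.div_const ((k:ℝ)+1)
  have h2 : HasDerivAt (fun t => bernoulliFun (k+2) t / ((k+1)*(k+2)))
      ((k+2) * bernoulliFun (k+1) t / ((k+1)*(k+2))) t := by
    simpa using (hasDerivAt_bernoulliFun (k+2) t).div_const (((k:ℝ)+1)*((k:ℝ)+2))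
  refine (h1.add h2).congr_deriv ?_
  field_simp
  ring

lemma integral_sub_mul_bernoulliFun (k : ℕ) (c a b : ℝ) :
    ∫ t in a..b, (c - t) * bernoulliFun k t
      = ((c - b) * bernoulliFun (k+1) b / (k+1) + bernoulliFun (k+2) b / ((k+1)*(k+2)))
        - ((c - a) * bernoulliFun (k+1) a / (k+1) + bernoulliFun (k+2) a / ((k+1)*(k+2))) :=
  integral_eq_sub_of_hasDerivAt (fun t _ => hasDerivAt_sub_mul_bernoulliFun k c t)
    (((continuous_const.sub continuous_id).mul (continuous_bernoulliFun k)).intervalIntegrable _ _)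

lemma integral_b1R_sub_mul_bernoulliFun {k : ℕ} (hk : k ≠ 0) {z : ℝ} (hz : z ∈ Ico (0:ℝ) 1) :
    ∫ t in (0:ℝ)..1, b1R (z - t) * bernoulliFun k t = -bernoulliFun (k+1) z / (k+1) := by
  have hint : ∀ a b : ℝ, IntervalIntegrable (fun t => b1R (z - t) * bernoulliFun k t) volume a b :=
    fun a b => (intervalIntegrable_b1R_sub z a b).mul_continuousOn
      (continuous_bernoulliFun k).continuousOn
  rw [← integral_add_adjacent_intervals (hint 0 z) (hint z 1)]
  have hleft : ∫ t in (0:ℝ)..z, b1R (z - t) * bernoulliFun k t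
      = ∫ t in (0:ℝ)..z, (z - 1/2 - t) * bernoulliFun k t := by
    refine integral_congr fun t ht => ?_
    rw [uIcc_of_le hz.1] at ht
    rw [b1R_of_mem_Ico_zero_one ⟨by linarith [ht.2], by linarith [ht.1, hz.2]⟩]
    ring
  have hright : ∫ t in z..(1:ℝ), b1R (z - t) * bernoulliFun k t
      = ∫ t in z..(1:ℝ), (z + 1/2 - t) * bernoulliFun k t := by
    refine integral_congr_ae (ae_of_all _ fun t ht => ?_)
    rw [uIoc_of_le hz.2.le] at ht
    rw [b1R_of_mem_Ico_neg_one_zero ⟨by linarith [ht.2, hz.1], by linarith [ht.1]⟩]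
    ring
  rw [hleft, hright, integral_sub_mul_bernoulliFun, integral_sub_mul_bernoulliFun,
    bernoulliFun_endpoints_eq_of_ne_one (k := k + 1) (by omega),
    bernoulliFun_endpoints_eq_of_ne_one (k := k + 2) (by omega)]
  field_simp
  ring

lemma integral_b1R_sub_mul_periodicBernoulli {k : ℕ} (hk : k ≠ 0) (x y : ℝ) :
    ∫ t in (0:ℝ)..1, b1R (x - t) * periodicBernoulli k (t - y)
      = -periodicBernoulli (k+1) (x - y) / (k+1) := by
  set g : ℝ → ℝ := fun s => b1R (x - y - s) * periodicBernoulli k s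
  have hg : Function.Periodic g 1 :=
    (b1R_periodic.const_sub (x - y)).mul (periodicBernoulli_periodic k)
  have hshift : ∫ t in (0:ℝ)..1, b1R (x - t) * periodicBernoulli k (t - y)
      = ∫ s in (0:ℝ)..1, g s := by
    calc _ = ∫ t in (0:ℝ)..1, g (t - y) := integral_congr fun t _ => by
            simp only [g, sub_sub_sub_cancel_right]
      _ = ∫ s in -y..-y + 1, g s := by rw [integral_comp_sub_right, zero_sub, neg_add_eq_sub]
      _ = ∫ s in (0:ℝ)..0 + 1, g s := hg.intervalIntegral_add_eq (-y) 0
      _ = ∫ s in (0:ℝ)..1, g s := by rw [zero_add]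
  have hfract : ∫ s in (0:ℝ)..1, g s
      = ∫ s in (0:ℝ)..1, b1R (Int.fract (x - y) - s) * bernoulliFun k s := by
    rw [integral_of_le zero_le_one, integral_of_le zero_le_one, integral_Ioc_eq_integral_Ioo,
      integral_Ioc_eq_integral_Ioo]
    refine setIntegral_congr_fun measurableSet_Ioo fun s hs => ?_
    have hxy : x - y - s = Int.fract (x - y) - s + ⌊x - y⌋ := by
      linarith [Int.fract_add_floor (x - y)]
    simp only [g]
    rw [hxy, b1R_add_intCast, periodicBernoulli, Int.fract_eq_self.mpr ⟨hs.1.le, hs.2⟩]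
  rw [hshift, hfract, integral_b1R_sub_mul_bernoulliFun hk ⟨Int.fract_nonneg _, Int.fract_lt_one _⟩,
    periodicBernoulli]

instance : IsProbabilityMeasure (volume.restrict (Icc (0:ℝ) 1)) := ⟨by simp⟩

theorem integral_pi_eq_integral_integral_cons {α E : Type*} [MeasurableSpace α]
    [NormedAddCommGroup E] [NormedSpace ℝ E] (μ : Measure α) [SigmaFinite μ] {n : ℕ}
    {f : (Fin (n+1) → α) → E} (hf : Integrable f (Measure.pi fun _ => μ)) :
    ∫ u, f u ∂(Measure.pi fun _ => μ) = ∫ t, ∫ v, f (Fin.cons t v) ∂(Measure.pi fun _ => μ) ∂μ := by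
  have e := (measurePreserving_piFinSuccAbove (fun _ : Fin (n+1) => μ) 0).symm
  rw [← e.integral_comp', integral_prod _ (by exact e.integrable_comp_of_integrable hf)]
  simp only [MeasurableEquiv.piFinSuccAbove_symm_apply, Fin.insertNthEquiv_zero]
  rfl

def pathProd {n : ℕ} (w : Fin (n+1) → ℝ) : ℝ := ∏ i : Fin n, b1R (w i.castSucc - w i.succ)

lemma pathProd_cons {n : ℕ} (x : ℝ) (w : Fin (n+1) → ℝ) :
    pathProd (Fin.cons x w : Fin (n+2) → ℝ) = b1R (x - w 0) * pathProd w := by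
  simp [pathProd, Fin.prod_univ_succ]

lemma measurable_pathProd {n : ℕ} : Measurable (pathProd (n := n)) :=
  Finset.measurable_prod _ fun _ _ =>
    measurable_b1R.comp ((measurable_pi_apply _).sub (measurable_pi_apply _))

lemma abs_pathProd_le {n : ℕ} (w : Fin (n+1) → ℝ) : |pathProd w| ≤ 1 := by
  rw [pathProd, Finset.abs_prod]
  exact Finset.prod_le_one (fun _ _ => abs_nonneg _) fun _ _ => abs_b1R_le _

lemma integrable_pathProd_comp {α : Type*} [MeasurableSpace α] {μ : Measure α} [IsFiniteMeasure μ]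
    {n : ℕ} {g : α → Fin (n+1) → ℝ} (hg : Measurable g) : Integrable (fun a => pathProd (g a)) μ :=
  .of_bound (measurable_pathProd.comp hg).aestronglyMeasurable 1
    (ae_of_all _ fun _ => abs_pathProd_le _)

theorem integral_pathProd_cons_snoc (m : ℕ) (x y : ℝ) :
    ∫ v, pathProd (Fin.cons x (Fin.snoc v y) : Fin (m+2) → ℝ)
        ∂(Measure.pi fun _ : Fin m => volume.restrict (Icc (0:ℝ) 1))
      = (-1)^m * periodicBernoulli (m+1) (x - y) / (m+1).factorial := by
  induction m generalizing x with
  | zero => simp [pathProd, periodicBernoulli_one, Fin.snoc]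
  | succ m ih =>
    rw [integral_pi_eq_integral_integral_cons _ (integrable_pathProd_comp (by fun_prop))]
    simp only [← Fin.cons_snoc_eq_snoc_cons, pathProd_cons x, Fin.cons_zero,
      MeasureTheory.integral_const_mul, ih]
    have hconv : ∫ t in Icc (0:ℝ) 1, b1R (x - t) * periodicBernoulli (m+1) (t - y)
        = -periodicBernoulli (m+2) (x - y) / (m+2) := by
      rw [integral_Icc_eq_integral_Ioc, ← integral_of_le zero_le_one,
        integral_b1R_sub_mul_periodicBernoulli m.succ_ne_zero]
      push_cast
      ring
    calc _ = (-1)^m / (m+1).factorial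
          * ∫ t in Icc (0:ℝ) 1, b1R (x - t) * periodicBernoulli (m+1) (t - y) := by
          rw [← MeasureTheory.integral_const_mul]
          congr with t
          ring
      _ = _ := by
          rw [hconv, Nat.factorial_succ (m+1)]
          push_cast
          field_simp
          ring

lemma prod_b1R_sub_add_one {m : ℕ} (u : Fin (m+1) → ℝ) :
    ∏ i, b1R (u i - u (i+1)) = pathProd (Fin.snoc u (u 0) : Fin (m+2) → ℝ) := by
  refine Finset.prod_congr rfl fun i _ => ?_
  rw [Fin.snoc_castSucc]
  congr 2
  induction i using Fin.lastCases with
  | last => rw [Fin.last_add_one, Fin.succ_last, Fin.snoc_last]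
  | cast j => rw [Fin.succ_castSucc, Fin.snoc_castSucc, Fin.coeSucc_eq_succ]

theorem integral_prod_b1R_cyclic (m : ℕ) :
    ∫ u, ∏ i : Fin (m+1), b1R (u i - u (i+1))
        ∂(Measure.pi fun _ => volume.restrict (Icc (0:ℝ) 1))
      = (-1)^m * bernoulli (m+1) / (m+1).factorial := by
  simp_rw [prod_b1R_sub_add_one]
  rw [integral_pi_eq_integral_integral_cons _ (integrable_pathProd_comp (by fun_prop))]
  simp [← Fin.cons_snoc_eq_snoc_cons, integral_pathProd_cons_snoc, periodicBernoulli,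
    bernoulliFun_eval_zero]

lemma neg_one_pow_mul_bernoulli_succ {m : ℕ} (hm : m ≠ 0) :
    (-1)^m * bernoulli (m+1) = -bernoulli (m+1) := by
  rcases m.even_or_odd with hev | hodd
  · rw [bernoulli_eq_zero_of_odd hev.add_one (by omega)]; simp
  · rw [hodd.neg_one_pow, neg_one_mul]

end

theorem statement14 (l : ℕ) (hl : 2 ≤ l) :
    (∫ u in (Set.univ.pi fun _ : Fin l => Set.Icc (0:ℝ) 1),
      ∏ i : Fin l, b1R (u i - u ⟨(i.1 + 1) % l, Nat.mod_lt _ (by omega)⟩))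
      = -((bernoulli l : ℚ) : ℝ) / (l.factorial : ℝ) := by
  obtain ⟨m, rfl⟩ : ∃ m, l = m + 1 := ⟨l - 1, by omega⟩
  have hsucc : ∀ i : Fin (m+1),
      (⟨(i.1 + 1) % (m+1), Nat.mod_lt _ (by omega)⟩ : Fin (m+1)) = i + 1 :=
    fun i => Fin.ext (by simp [Fin.val_add])
  simp_rw [hsucc]
  rw [volume_pi, Measure.restrict_pi_pi, integral_prod_b1R_cyclic]
  congr 1
  exact_mod_cast neg_one_pow_mul_bernoulli_succ (by omega)

end Paper
end
end
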